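/- For the indicator V of [0,b] with 0 < b < R, the Helmholtz-Bergman eigenvalue ratio Λ_k = (∫_0^b J_{k+(d−2)/2}(r)² r dr)/(∫_0^R J_{k+(d−2)/2}(r)² r dr) satisfies Λ_k·(R/b)^{2k+d} → 1 as k → ∞. -/

import Mathlib

/-- Bessel function of the first kind of real order `ν ≥ 0`, power-series definition. -/
noncomputable def besselJR (ν : ℝ) (r : ℝ) : ℝ :=
  ∑' n : ℕ, (-1 : ℝ) ^ n * (r / 2) ^ (2 * (n : ℝ) + ν) /
    ((Nat.factorial n : ℝ) * Real.Gamma ((n : ℝ) + ν + 1))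

noncomputable def besselT (ν r : ℝ) : ℝ :=
  ∑' n : ℕ, (-1:ℝ)^n * ((r/2)^2)^n / ((Nat.factorial n : ℝ) * Real.Gamma ((n:ℝ) + ν + 1))

lemma gamma_lb (x : ℝ) (hx : 0 < x) (n : ℕ) :
    Real.Gamma x * x ^ n ≤ Real.Gamma ((n:ℝ) + x) := by
  induction n with
  | zero => simp
  | succ n ih =>
      have hnx : (0:ℝ) < (n:ℝ) + x := by positivity
      have h1 : Real.Gamma (((n+1 : ℕ):ℝ) + x) = ((n:ℝ)+x) * Real.Gamma ((n:ℝ)+x) := by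
        push_cast
        rw [show (n:ℝ) + 1 + x = ((n:ℝ) + x) + 1 by ring, Real.Gamma_add_one hnx.ne']
      have hg : (0:ℝ) < Real.Gamma ((n:ℝ)+x) := Real.Gamma_pos_of_pos hnx
      rw [h1]
      calc Real.Gamma x * x ^ (n+1) = (Real.Gamma x * x ^ n) * x := by ring
        _ ≤ Real.Gamma ((n:ℝ)+x) * x := by
            exact mul_le_mul_of_nonneg_right ih hx.le
        _ ≤ ((n:ℝ)+x) * Real.Gamma ((n:ℝ)+x) := by
            rw [mul_comm]
            exact mul_le_mul_of_nonneg_right (by linarith) hg.le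

lemma term_abs_bound (ν : ℝ) (hν : 0 < ν) {q Q : ℝ} (hq : 0 ≤ q) (hqQ : q ≤ Q) (n : ℕ) :
    |(-1:ℝ)^n * q^n / ((Nat.factorial n : ℝ) * Real.Gamma ((n:ℝ) + ν + 1))|
      ≤ (Q/(ν+1))^n / Real.Gamma (ν+1) := by
  have hν1 : (0:ℝ) < ν + 1 := by linarith
  have hgν : (0:ℝ) < Real.Gamma (ν+1) := Real.Gamma_pos_of_pos hν1
  have hgn : (0:ℝ) < Real.Gamma ((n:ℝ) + ν + 1) := Real.Gamma_pos_of_pos (by positivity)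
  have hfac : (1:ℝ) ≤ (Nat.factorial n : ℝ) := by exact_mod_cast Nat.one_le_iff_ne_zero.mpr (Nat.factorial_ne_zero n)
  have hlb : Real.Gamma (ν+1) * (ν+1)^n ≤ Real.Gamma ((n:ℝ) + ν + 1) := by
    have := gamma_lb (ν+1) hν1 n
    rwa [show (n:ℝ) + (ν+1) = (n:ℝ) + ν + 1 by ring] at this
  have habs : |(-1:ℝ)^n * q^n / ((Nat.factorial n : ℝ) * Real.Gamma ((n:ℝ) + ν + 1))|
      = q^n / ((Nat.factorial n : ℝ) * Real.Gamma ((n:ℝ) + ν + 1)) := by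
    rw [abs_div, abs_mul, abs_pow, abs_pow, abs_neg, abs_one, one_pow, one_mul,
      abs_of_nonneg hq, abs_of_pos (by positivity)]
  rw [habs, div_pow, div_div]
  apply div_le_div₀ (pow_nonneg (hq.trans hqQ) n) (pow_le_pow_left₀ hq hqQ n) (by positivity)
  calc (ν+1)^n * Real.Gamma (ν+1) = Real.Gamma (ν+1) * (ν+1)^n := mul_comm _ _
    _ ≤ Real.Gamma ((n:ℝ) + ν + 1) := hlb
    _ ≤ (Nat.factorial n : ℝ) * Real.Gamma ((n:ℝ) + ν + 1) := le_mul_of_one_le_left hgn.le hfac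

lemma besselT_summable (ν : ℝ) (hν : 0 < ν) {q : ℝ} (hq : 0 ≤ q) (hu : q/(ν+1) < 1) :
    Summable (fun n : ℕ => (-1:ℝ)^n * q^n / ((Nat.factorial n : ℝ) * Real.Gamma ((n:ℝ) + ν + 1))) := by
  apply Summable.of_abs
  apply Summable.of_nonneg_of_le (fun n => abs_nonneg _) (term_abs_bound ν hν hq le_rfl)
  exact (summable_geometric_of_lt_one (by positivity) hu).div_const _

lemma besselJR_eq (ν : ℝ) (hν : 0 < ν) {r : ℝ} (hr : 0 ≤ r) :
    besselJR ν r = (r/2) ^ ν * besselT ν r := by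
  rcases eq_or_lt_of_le hr with h0 | h0
  · have : r = 0 := h0.symm
    subst this
    have hz : ∀ n : ℕ, (-1 : ℝ) ^ n * ((0:ℝ) / 2) ^ (2 * (n : ℝ) + ν) /
        ((Nat.factorial n : ℝ) * Real.Gamma ((n : ℝ) + ν + 1)) = 0 := by
      intro n
      rw [show (0:ℝ)/2 = 0 by norm_num, Real.zero_rpow (by positivity)]
      ring
    rw [besselJR, tsum_congr hz, tsum_zero,
      show (0:ℝ)/2 = 0 by norm_num, Real.zero_rpow hν.ne']
    ring
  · have h2 : (0:ℝ) < r/2 := by positivity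
    have hterm : ∀ n : ℕ, (-1 : ℝ) ^ n * (r / 2) ^ (2 * (n : ℝ) + ν) /
        ((Nat.factorial n : ℝ) * Real.Gamma ((n : ℝ) + ν + 1))
        = (r/2)^ν * ((-1:ℝ)^n * ((r/2)^2)^n / ((Nat.factorial n : ℝ) * Real.Gamma ((n:ℝ) + ν + 1))) := by
      intro n
      rw [Real.rpow_add h2, show (2 * (n:ℝ)) = ((2*n : ℕ):ℝ) by push_cast; ring,
        Real.rpow_natCast, pow_mul]
      ring
    rw [besselJR, tsum_congr hterm, tsum_mul_left, besselT]

set_option maxHeartbeats 1000000 in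
lemma tsumT_bound (ν : ℝ) (hν : 0 < ν) {q Q : ℝ} (hq : 0 ≤ q) (hqQ : q ≤ Q)
    (hu : Q/(ν+1) ≤ 1/2) :
    |(∑' n : ℕ, (-1:ℝ)^n * q^n / ((Nat.factorial n : ℝ) * Real.Gamma ((n:ℝ) + ν + 1)))
        - 1/Real.Gamma (ν+1)|
      ≤ (2*(Q/(ν+1))) / Real.Gamma (ν+1) := by
  set f : ℕ → ℝ := fun n => (-1:ℝ)^n * q^n / ((Nat.factorial n : ℝ) * Real.Gamma ((n:ℝ) + ν + 1)) with hf
  set u : ℝ := Q/(ν+1) with hudef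
  have hν1 : (0:ℝ) < ν + 1 := by linarith
  have hgν : (0:ℝ) < Real.Gamma (ν+1) := Real.Gamma_pos_of_pos hν1
  have hQ0 : 0 ≤ Q := hq.trans hqQ
  have hu0 : 0 ≤ u := by positivity
  have hu1 : u < 1 := lt_of_le_of_lt hu (by norm_num)
  have habs : Summable (fun n => |f n|) := by
    apply Summable.of_nonneg_of_le (fun n => abs_nonneg _) (term_abs_bound ν hν hq hqQ)
    exact (summable_geometric_of_lt_one hu0 hu1).div_const _
  have hsum : Summable f := habs.of_abs
  have hshift : Summable (fun n => |f (n+1)|) := (summable_nat_add_iff 1).mpr habs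
  have hf0 : f 0 = 1/Real.Gamma (ν+1) := by
    simp [hf]
  have hsplit : (∑' n, f n) - 1/Real.Gamma (ν+1) = ∑' n, f (n+1) := by
    rw [Summable.tsum_eq_zero_add hsum, hf0]; ring
  rw [hsplit]
  have hgeo : Summable (fun n : ℕ => u^(n+1) / Real.Gamma (ν+1)) := by
    have : Summable (fun n : ℕ => u^(n+1)) := by
      simpa [pow_succ'] using (summable_geometric_of_lt_one hu0 hu1).mul_left u
    exact this.div_const _
  calc |∑' n, f (n+1)| ≤ ∑' n, |f (n+1)| := by
        simpa [Real.norm_eq_abs] using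
          norm_tsum_le_tsum_norm (f := fun n => f (n+1)) (by simpa [Real.norm_eq_abs] using hshift)
    _ ≤ ∑' n : ℕ, u^(n+1) / Real.Gamma (ν+1) := by
        apply Summable.tsum_le_tsum _ hshift hgeo
        intro n
        exact term_abs_bound ν hν hq hqQ (n+1)
    _ = u * (1-u)⁻¹ / Real.Gamma (ν+1) := by
        rw [tsum_div_const]
        congr 1
        rw [show (fun n : ℕ => u^(n+1)) = fun n : ℕ => u * u^n from funext fun n => pow_succ' u n,
          tsum_mul_left, tsum_geometric_of_lt_one hu0 hu1]
    _ ≤ (2*u) / Real.Gamma (ν+1) := by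
        have h12 : (1:ℝ)/2 ≤ 1 - u := by linarith
        have hinv : (1-u)⁻¹ ≤ 2 := by
          rw [inv_le_comm₀ (by linarith) (by norm_num)]
          linarith
        have hstep : u * (1-u)⁻¹ ≤ 2*u := by
          calc u * (1-u)⁻¹ ≤ u * 2 := mul_le_mul_of_nonneg_left hinv hu0
            _ = 2 * u := by ring
        exact div_le_div₀ (by positivity) hstep hgν le_rfl

lemma besselT_continuousOn (ν : ℝ) (hν : 0 < ν) {R : ℝ} (hu : (R/2)^2/(ν+1) < 1) :
    ContinuousOn (besselT ν) (Set.Icc 0 R) := by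
  have h0 : besselT ν = fun r => ∑' n : ℕ,
      (-1:ℝ)^n * ((r/2)^2)^n / ((Nat.factorial n : ℝ) * Real.Gamma ((n:ℝ) + ν + 1)) := rfl
  rw [h0]
  apply continuousOn_tsum (u := fun n => ((R/2)^2/(ν+1))^n / Real.Gamma (ν+1))
  · intro n
    apply Continuous.continuousOn
    fun_prop
  · exact (summable_geometric_of_lt_one (by positivity) hu).div_const _
  · intro n r hr
    rw [Real.norm_eq_abs]
    apply term_abs_bound ν hν (by positivity)
    have h1 := hr.1
    have h2 := hr.2
    nlinarith

lemma besselJR_continuousOn (ν : ℝ) (hν : 0 < ν) {R : ℝ} (hu : (R/2)^2/(ν+1) < 1) :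
    ContinuousOn (besselJR ν) (Set.Icc 0 R) := by
  apply ContinuousOn.congr (f := fun r => (r/2)^ν * besselT ν r)
  · apply ContinuousOn.mul _ (besselT_continuousOn ν hν hu)
    exact ((continuous_id.div_const 2).continuousOn).rpow_const (fun x _ => Or.inr hν.le)
  · intro r hr
    exact besselJR_eq ν hν hr.1

lemma integral_rpow_shape (p : ℝ) (hp : 0 < p) {x : ℝ} (hx : 0 ≤ x) :
    ∫ r in (0:ℝ)..x, ((r/2)^p)^2 * r = (x^(2*p+2)/(2*p+2)) / (2:ℝ)^(2*p) := by
  have hcong : ∀ r ∈ Set.uIcc (0:ℝ) x, ((r/2)^p)^2 * r = r^(2*p+1) / (2:ℝ)^(2*p) := by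
    intro r hr
    rw [Set.uIcc_of_le hx] at hr
    have hr0 : 0 ≤ r := hr.1
    rcases eq_or_lt_of_le hr0 with h | h
    · rw [← h]
      rw [show (0:ℝ)/2 = 0 by norm_num, Real.zero_rpow hp.ne', Real.zero_rpow (by positivity)]
      ring
    · have h2 : ((r/2:ℝ)^p)^2 = (r/2)^(2*p) := by
        rw [← Real.rpow_natCast ((r/2)^p) 2, ← Real.rpow_mul (by positivity)]
        norm_num
        rw [mul_comm]
      rw [h2, Real.div_rpow hr0 (by norm_num)]
      rw [div_mul_eq_mul_div, ← Real.rpow_add_one h.ne']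
  rw [intervalIntegral.integral_congr hcong]
  have : ∀ r, r^(2*p+1) / (2:ℝ)^(2*p) = r^(2*p+1) * ((2:ℝ)^(2*p))⁻¹ := fun r => div_eq_mul_inv _ _
  rw [intervalIntegral.integral_congr (fun r _ => this r), intervalIntegral.integral_mul_const,
    integral_rpow (Or.inl (by linarith))]
  rw [Real.zero_rpow (by positivity)]
  rw [show 2*p+1+1 = 2*p+2 by ring]
  field_simp
  rw [sub_zero]

lemma integral_besselJR_bounds (ν : ℝ) (hν : 1 ≤ ν) {x R : ℝ} (hx : 0 ≤ x) (hxR : x ≤ R)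
    (hu : (R/2)^2/(ν+1) ≤ 1/2) :
    (1/Real.Gamma (ν+1) * (1 - 2*((R/2)^2/(ν+1))))^2 * ((x^(2*ν+2)/(2*ν+2)) / (2:ℝ)^(2*ν))
      ≤ (∫ r in (0:ℝ)..x, (besselJR ν r)^2 * r) ∧
    (∫ r in (0:ℝ)..x, (besselJR ν r)^2 * r)
      ≤ (1/Real.Gamma (ν+1) * (1 + 2*((R/2)^2/(ν+1))))^2 * ((x^(2*ν+2)/(2*ν+2)) / (2:ℝ)^(2*ν)) := by
  have hν0 : (0:ℝ) < ν := by linarith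
  set u : ℝ := (R/2)^2/(ν+1) with hudef
  set c : ℝ := 1/Real.Gamma (ν+1) with hcdef
  set ε : ℝ := 2*u with hεdef
  have hR0 : 0 ≤ R := le_trans hx hxR
  have hu0 : 0 ≤ u := by positivity
  have hgν : 0 < Real.Gamma (ν+1) := Real.Gamma_pos_of_pos (by linarith)
  have hc0 : 0 < c := by positivity
  have hε1 : ε ≤ 1 := by rw [hεdef]; linarith
  have hε0 : 0 ≤ ε := by positivity
  have hT : ∀ r ∈ Set.Icc (0:ℝ) x, c*(1-ε) ≤ besselT ν r ∧ besselT ν r ≤ c*(1+ε) := by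
    intro r hr
    have hq : (0:ℝ) ≤ (r/2)^2 := by positivity
    have hqQ : (r/2)^2 ≤ (R/2)^2 := by nlinarith [hr.1, hr.2]
    have hb := tsumT_bound ν hν0 hq hqQ hu
    have hbT : |besselT ν r - c| ≤ ε * c := by
      have heq : (2*u)/Real.Gamma (ν+1) = ε * c := by rw [hεdef, hcdef]; field_simp
      rw [← heq]
      exact hb
    have h2 := abs_le.mp hbT
    constructor <;> nlinarith [h2.1, h2.2]
  have hpt : ∀ r ∈ Set.Icc (0:ℝ) x,
      (c*(1-ε))^2 * (((r/2)^ν)^2 * r) ≤ (besselJR ν r)^2 * r ∧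
      (besselJR ν r)^2 * r ≤ (c*(1+ε))^2 * (((r/2)^ν)^2 * r) := by
    intro r hr
    have hr0 : 0 ≤ r := hr.1
    obtain ⟨hTl, hTu⟩ := hT r hr
    have hcl : 0 ≤ c*(1-ε) := by nlinarith
    have hT2l : (c*(1-ε))^2 ≤ (besselT ν r)^2 := by nlinarith
    have hT2u : (besselT ν r)^2 ≤ (c*(1+ε))^2 := by nlinarith
    have hA : 0 ≤ ((r/2)^ν)^2 * r := by positivity
    rw [besselJR_eq ν hν0 hr0]
    constructor
    · calc (c*(1-ε))^2 * (((r/2)^ν)^2 * r) = (((r/2)^ν)^2 * r) * (c*(1-ε))^2 := by ring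
        _ ≤ (((r/2)^ν)^2 * r) * (besselT ν r)^2 := mul_le_mul_of_nonneg_left hT2l hA
        _ = ((r/2)^ν * besselT ν r)^2 * r := by ring
    · calc ((r/2)^ν * besselT ν r)^2 * r = (((r/2)^ν)^2 * r) * (besselT ν r)^2 := by ring
        _ ≤ (((r/2)^ν)^2 * r) * (c*(1+ε))^2 := mul_le_mul_of_nonneg_left hT2u hA
        _ = (c*(1+ε))^2 * (((r/2)^ν)^2 * r) := by ring
  have hult : u < 1 := lt_of_le_of_lt hu (by norm_num)
  have hJc : ContinuousOn (fun r => (besselJR ν r)^2 * r) (Set.Icc (0:ℝ) x) := by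
    apply ContinuousOn.mul _ continuous_id.continuousOn
    exact ((besselJR_continuousOn ν hν0 hult).mono (Set.Icc_subset_Icc_right hxR)).pow 2
  have hPc : ContinuousOn (fun r => ((r/2)^ν)^2 * r) (Set.Icc (0:ℝ) x) := by
    apply ContinuousOn.mul _ continuous_id.continuousOn
    exact (((continuous_id.div_const 2).continuousOn).rpow_const (fun y _ => Or.inr hν0.le)).pow 2
  have hJi : IntervalIntegrable (fun r => (besselJR ν r)^2 * r) MeasureTheory.volume 0 x :=
    ContinuousOn.intervalIntegrable (by rwa [Set.uIcc_of_le hx])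
  have hPi : IntervalIntegrable (fun r => ((r/2)^ν)^2 * r) MeasureTheory.volume 0 x :=
    ContinuousOn.intervalIntegrable (by rwa [Set.uIcc_of_le hx])
  have low := intervalIntegral.integral_mono_on hx (hPi.const_mul ((c*(1-ε))^2)) hJi
    (fun r hr => (hpt r hr).1)
  have high := intervalIntegral.integral_mono_on hx hJi (hPi.const_mul ((c*(1+ε))^2))
    (fun r hr => (hpt r hr).2)
  rw [intervalIntegral.integral_const_mul, integral_rpow_shape ν hν0 hx] at low high
  exact ⟨low, high⟩

theorem stmt18 (d : ℕ) (hd : 2 ≤ d) (b R : ℝ) (hb : 0 < b) (hbR : b < R)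
    (Λ : ℕ → ℝ)
    (hΛ : ∀ k, Λ k =
      (∫ r in (0 : ℝ)..b, (besselJR ((k : ℝ) + ((d : ℝ) - 2) / 2) r) ^ 2 * r) /
        (∫ r in (0 : ℝ)..R, (besselJR ((k : ℝ) + ((d : ℝ) - 2) / 2) r) ^ 2 * r)) :
    Filter.Tendsto (fun k : ℕ => Λ k * (R / b) ^ (2 * k + d)) Filter.atTop (nhds 1) := by
  have hR0 : (0:ℝ) < R := hb.trans hbR
  have hd2 : (0:ℝ) ≤ ((d:ℝ) - 2)/2 := by
    have : (2:ℝ) ≤ (d:ℝ) := by exact_mod_cast hd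
    linarith
  set a : ℝ := ((d:ℝ) - 2)/2 with ha
  set ε : ℕ → ℝ := fun k => 2*((R/2)^2/(((k:ℝ) + a)+1)) with hε
  -- limit of ε
  have hεlim : Filter.Tendsto ε Filter.atTop (nhds 0) := by
    have h1 : Filter.Tendsto (fun k : ℕ => ((k:ℝ) + a) + 1) Filter.atTop Filter.atTop :=
      Filter.tendsto_atTop_add_const_right _ 1
        (Filter.tendsto_atTop_add_const_right _ a tendsto_natCast_atTop_atTop)
    have h2 : Filter.Tendsto (fun k : ℕ => (((k:ℝ) + a) + 1)⁻¹) Filter.atTop (nhds 0) :=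
      h1.inv_tendsto_atTop
    have h3 := h2.const_mul (2*(R/2)^2)
    rw [mul_zero] at h3
    convert h3 using 2 with k
    rw [hε]
    ring
  have hεnn : ∀ k, 0 ≤ ε k := by
    intro k
    have : (0:ℝ) ≤ (k:ℝ) + a := by positivity
    rw [hε]
    positivity
  -- limits of the bounding sequences
  have hlow : Filter.Tendsto (fun k => (1 - ε k)^2/(1 + ε k)^2) Filter.atTop (nhds 1) := by
    have hnum : Filter.Tendsto (fun k => (1 - ε k)^2) Filter.atTop (nhds 1) := by
      have := (tendsto_const_nhds (x := (1:ℝ)) (f := Filter.atTop (α := ℕ))).sub hεlim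
      rw [sub_zero] at this
      simpa using this.pow 2
    have hden : Filter.Tendsto (fun k => (1 + ε k)^2) Filter.atTop (nhds 1) := by
      have := (tendsto_const_nhds (x := (1:ℝ)) (f := Filter.atTop (α := ℕ))).add hεlim
      rw [add_zero] at this
      simpa using this.pow 2
    simpa [Pi.div_def] using hnum.div hden one_ne_zero
  have hhigh : Filter.Tendsto (fun k => (1 + ε k)^2/(1 - ε k)^2) Filter.atTop (nhds 1) := by
    have hnum : Filter.Tendsto (fun k => (1 + ε k)^2) Filter.atTop (nhds 1) := by
      have := (tendsto_const_nhds (x := (1:ℝ)) (f := Filter.atTop (α := ℕ))).add hεlim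
      rw [add_zero] at this
      simpa using this.pow 2
    have hden : Filter.Tendsto (fun k => (1 - ε k)^2) Filter.atTop (nhds 1) := by
      have := (tendsto_const_nhds (x := (1:ℝ)) (f := Filter.atTop (α := ℕ))).sub hεlim
      rw [sub_zero] at this
      simpa using this.pow 2
    simpa [Pi.div_def] using hnum.div hden one_ne_zero
  -- eventual bounds
  obtain ⟨N, hN⟩ := exists_nat_ge (4*(R/2)^2)
  have key : ∀ᶠ k in Filter.atTop,
      (1 - ε k)^2/(1 + ε k)^2 ≤ Λ k * (R/b)^(2*k+d) ∧
      Λ k * (R/b)^(2*k+d) ≤ (1 + ε k)^2/(1 - ε k)^2 := by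
    rw [Filter.eventually_atTop]
    refine ⟨max 1 N, fun k hk => ?_⟩
    have hk1 : 1 ≤ k := le_trans (le_max_left _ _) hk
    have hkN : (N:ℝ) ≤ (k:ℝ) := by exact_mod_cast le_trans (le_max_right _ _) hk
    set ν : ℝ := (k:ℝ) + a with hν
    have hν1 : 1 ≤ ν := by
      have : (1:ℝ) ≤ (k:ℝ) := by exact_mod_cast hk1
      rw [hν]; linarith
    have hu4 : (R/2)^2/(ν+1) ≤ 1/4 := by
      rw [div_le_div_iff₀ (by positivity) (by norm_num)]
      rw [hν]; linarith
    have hu2 : (R/2)^2/(ν+1) ≤ 1/2 := le_trans hu4 (by norm_num)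
    have hεk : ε k = 2*((R/2)^2/(ν+1)) := rfl
    have hεhalf : ε k ≤ 1/2 := by rw [hεk]; linarith
    have hε0 : 0 ≤ ε k := hεnn k
    set c : ℝ := 1/Real.Gamma (ν+1) with hc
    have hgν : 0 < Real.Gamma (ν+1) := Real.Gamma_pos_of_pos (by linarith)
    have hc0 : 0 < c := by rw [hc]; positivity
    set s : ℝ := 2*ν+2 with hs
    have hs0 : (0:ℝ) < s := by rw [hs]; linarith
    set Ib : ℝ := (b^s/s) / (2:ℝ)^(2*ν) with hIb
    set IR : ℝ := (R^s/s) / (2:ℝ)^(2*ν) with hIR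
    have hbs : (0:ℝ) < b^s := Real.rpow_pos_of_pos hb s
    have hRs : (0:ℝ) < R^s := Real.rpow_pos_of_pos hR0 s
    have h2ν : (0:ℝ) < (2:ℝ)^(2*ν) := Real.rpow_pos_of_pos (by norm_num) _
    have hIb0 : 0 < Ib := by rw [hIb]; positivity
    have hIR0 : 0 < IR := by rw [hIR]; positivity
    obtain ⟨lb, ub⟩ := integral_besselJR_bounds ν hν1 hb.le hbR.le hu2
    obtain ⟨lB, uB⟩ := integral_besselJR_bounds ν hν1 hR0.le le_rfl hu2
    rw [← hεk] at lb ub lB uB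
    rw [← hc] at lb ub lB uB
    rw [show 2*ν+2 = s from rfl] at lb ub lB uB
    rw [← hIb] at lb ub
    rw [← hIR] at lB uB
    set Nu : ℝ := ∫ r in (0:ℝ)..b, (besselJR ν r)^2 * r with hNu
    set De : ℝ := ∫ r in (0:ℝ)..R, (besselJR ν r)^2 * r with hDe
    have hΛk : Λ k = Nu/De := hΛ k
    set P : ℝ := (R/b)^(2*k+d) with hP
    have hPpos : 0 < P := by rw [hP]; positivity
    have hPs : P = (R/b)^s := by
      rw [hP, ← Real.rpow_natCast (R/b) (2*k+d)]
      congr 1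
      rw [hs, hν, ha]
      push_cast
      ring
    have hIBP : Ib * P = IR := by
      rw [hPs, hIb, hIR, Real.div_rpow hR0.le hb.le]
      field_simp
    have hone : (0:ℝ) < 1 - ε k := by linarith
    have hDlb : 0 < (c*(1 - ε k))^2 * IR := by positivity
    have hDe0 : 0 < De := lt_of_lt_of_le hDlb lB
    have hNP_up : Nu * P ≤ c^2*(1 + ε k)^2 * IR := by
      calc Nu * P ≤ ((c*(1 + ε k))^2 * Ib) * P := mul_le_mul_of_nonneg_right ub hPpos.le
        _ = c^2*(1 + ε k)^2 * (Ib*P) := by ring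
        _ = c^2*(1 + ε k)^2 * IR := by rw [hIBP]
    have hNP_lo : c^2*(1 - ε k)^2 * IR ≤ Nu * P := by
      calc c^2*(1 - ε k)^2 * IR = ((c*(1 - ε k))^2 * Ib) * P := by rw [← hIBP]; ring
        _ ≤ Nu * P := mul_le_mul_of_nonneg_right lb hPpos.le
    have hΛP : Λ k * P = (Nu*P)/De := by rw [hΛk]; ring
    constructor
    · rw [hΛP]
      have h1 : c^2*(1 - ε k)^2 * IR / ((c*(1 + ε k))^2 * IR) ≤ (Nu*P)/De := by
        have h0 : (0:ℝ) ≤ Nu*P :=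
          le_trans (mul_nonneg (mul_nonneg (by positivity) (sq_nonneg _)) hIR0.le) hNP_lo
        apply div_le_div₀ h0 hNP_lo hDe0 uB
      calc (1 - ε k)^2/(1 + ε k)^2 = c^2*(1 - ε k)^2 * IR / ((c*(1 + ε k))^2 * IR) := by
            rw [mul_pow]
            field_simp
        _ ≤ (Nu*P)/De := h1
    · rw [hΛP]
      have h1 : (Nu*P)/De ≤ c^2*(1 + ε k)^2 * IR / ((c*(1 - ε k))^2 * IR) := by
        apply div_le_div₀
          (mul_nonneg (mul_nonneg (by positivity) (sq_nonneg _)) hIR0.le) hNP_up hDlb lB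
      calc (Nu*P)/De ≤ c^2*(1 + ε k)^2 * IR / ((c*(1 - ε k))^2 * IR) := h1
        _ = (1 + ε k)^2/(1 - ε k)^2 := by
            rw [mul_pow]
            field_simp
  exact tendsto_of_tendsto_of_tendsto_of_le_of_le' hlow hhigh
    (key.mono fun k h => h.1) (key.mono fun k h => h.2)
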